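/- arXiv:2006.02608 — 5 statements merged into one kernel-verified Lean document; each statement's English description precedes it below -/
import Mathlib

section
/- Let p1 and p2 be two probability distributions over trajectories of state-action pairs generated by possibly different policies and dynamics. Suppose for all time steps t' with 1 ≤ t' ≤ t_sw, the expected (under p1) total variation distance between the one-step dynamics of p1 and p2 is at most ε_m_pre and the maximal TV distance between the policies is at most ε_π_pre; and for t_sw < t' ≤ t these are bounded by ε_m_post and ε_π_post respectively. Then the L1 distance between the marginal state-action distributions at time t satisfies Σ_{s_t,a_t} |p1(s_t,a_t) − p2(s_t,a_t)| ≤ 2(t − t_sw)(ε_m_post + ε_π_post) + 2 t_sw (ε_m_pre + ε_π_pre). -/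
/-- Lemma A.1: L1 bound on marginal state-action distributions of two rollout
processes whose policies and dynamics may switch at step `tsw`. -/
theorem stmt_0 {S A : Type*} [Fintype S] [Fintype A]
    (π1 π2 : ℕ → S → A → ℝ) (P1 P2 : ℕ → S → A → S → ℝ) (μ : S → ℝ)
    (st1 st2 : ℕ → S → ℝ) (p1 p2 : ℕ → S → A → ℝ)
    (t tsw : ℕ) (εmpre εppre εmpost εppost : ℝ)
    (htsw : tsw ≤ t)
    -- probability hypotheses
    (hμ : (∀ s, 0 ≤ μ s) ∧ ∑ s, μ s = 1)
    (hπ1 : ∀ n s, (∀ a, 0 ≤ π1 n s a) ∧ ∑ a, π1 n s a = 1)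
    (hπ2 : ∀ n s, (∀ a, 0 ≤ π2 n s a) ∧ ∑ a, π2 n s a = 1)
    (hP1 : ∀ n s a, (∀ s', 0 ≤ P1 n s a s') ∧ ∑ s', P1 n s a s' = 1)
    (hP2 : ∀ n s a, (∀ s', 0 ≤ P2 n s a s') ∧ ∑ s', P2 n s a s' = 1)
    -- both processes start from the common initial state distribution μ and the
    -- same initial policy
    (hst1_0 : ∀ s, st1 0 s = μ s) (hst2_0 : ∀ s, st2 0 s = μ s)
    (hπ0 : π1 0 = π2 0)
    -- the rollout processes: joint = state marginal × policy, state marginal evolves by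
    -- the corresponding dynamics
    (hp1 : ∀ n s a, p1 n s a = st1 n s * π1 n s a)
    (hp2 : ∀ n s a, p2 n s a = st2 n s * π2 n s a)
    (hst1 : ∀ n s', st1 (n + 1) s' = ∑ s, ∑ a, p1 n s a * P1 n s a s')
    (hst2 : ∀ n s', st2 (n + 1) s' = ∑ s, ∑ a, p2 n s a * P2 n s a s')
    -- pre-switch bounds (1 ≤ t' ≤ tsw)
    (hmpre : ∀ t', 1 ≤ t' → t' ≤ tsw →
      ∑ s, ∑ a, p1 (t' - 1) s a * ((1 / 2) * ∑ s', |P1 (t' - 1) s a s' - P2 (t' - 1) s a s'|)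
        ≤ εmpre)
    (hppre : ∀ t', 1 ≤ t' → t' ≤ tsw → ∀ s,
      (1 / 2) * ∑ a, |π1 t' s a - π2 t' s a| ≤ εppre)
    -- post-switch bounds (tsw < t' ≤ t)
    (hmpost : ∀ t', tsw < t' → t' ≤ t →
      ∑ s, ∑ a, p1 (t' - 1) s a * ((1 / 2) * ∑ s', |P1 (t' - 1) s a s' - P2 (t' - 1) s a s'|)
        ≤ εmpost)
    (hppost : ∀ t', tsw < t' → t' ≤ t → ∀ s,
      (1 / 2) * ∑ a, |π1 t' s a - π2 t' s a| ≤ εppost) :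
    ∑ s, ∑ a, |p1 t s a - p2 t s a| ≤
      2 * ((t : ℝ) - (tsw : ℝ)) * (εmpost + εppost) + 2 * (tsw : ℝ) * (εmpre + εppre) := by
  classical
  -- state marginals are probability distributions
  have hst1p : ∀ n, (∀ s, 0 ≤ st1 n s) ∧ (∑ s, st1 n s) = 1 := by
    intro n
    induction n with
    | zero =>
      refine ⟨fun s => ?_, ?_⟩
      · rw [hst1_0]; exact hμ.1 s
      · simp only [hst1_0]; exact hμ.2
    | succ n ih =>
      have hp1nn : ∀ s a, 0 ≤ p1 n s a := fun s a => by
        rw [hp1]; exact mul_nonneg (ih.1 s) ((hπ1 n s).1 a)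
      refine ⟨fun s' => ?_, ?_⟩
      · rw [hst1]
        exact Finset.sum_nonneg fun s _ => Finset.sum_nonneg fun a _ =>
          mul_nonneg (hp1nn s a) ((hP1 n s a).1 s')
      · calc ∑ s', st1 (n+1) s' = ∑ s', ∑ s, ∑ a, p1 n s a * P1 n s a s' := by
              simp only [hst1]
          _ = ∑ s, ∑ a, ∑ s', p1 n s a * P1 n s a s' := by
              rw [Finset.sum_comm]
              exact Finset.sum_congr rfl fun s _ => Finset.sum_comm
          _ = ∑ s, ∑ a, p1 n s a := by
              refine Finset.sum_congr rfl fun s _ => Finset.sum_congr rfl fun a _ => ?_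
              rw [← Finset.mul_sum, (hP1 n s a).2, mul_one]
          _ = ∑ s, st1 n s := by
              refine Finset.sum_congr rfl fun s _ => ?_
              simp only [hp1]
              rw [← Finset.mul_sum, (hπ1 n s).2, mul_one]
          _ = 1 := ih.2
  have hst2p : ∀ n, (∀ s, 0 ≤ st2 n s) ∧ (∑ s, st2 n s) = 1 := by
    intro n
    induction n with
    | zero =>
      refine ⟨fun s => ?_, ?_⟩
      · rw [hst2_0]; exact hμ.1 s
      · simp only [hst2_0]; exact hμ.2
    | succ n ih =>
      have hp2nn : ∀ s a, 0 ≤ p2 n s a := fun s a => by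
        rw [hp2]; exact mul_nonneg (ih.1 s) ((hπ2 n s).1 a)
      refine ⟨fun s' => ?_, ?_⟩
      · rw [hst2]
        exact Finset.sum_nonneg fun s _ => Finset.sum_nonneg fun a _ =>
          mul_nonneg (hp2nn s a) ((hP2 n s a).1 s')
      · calc ∑ s', st2 (n+1) s' = ∑ s', ∑ s, ∑ a, p2 n s a * P2 n s a s' := by
              simp only [hst2]
          _ = ∑ s, ∑ a, ∑ s', p2 n s a * P2 n s a s' := by
              rw [Finset.sum_comm]
              exact Finset.sum_congr rfl fun s _ => Finset.sum_comm
          _ = ∑ s, ∑ a, p2 n s a := by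
              refine Finset.sum_congr rfl fun s _ => Finset.sum_congr rfl fun a _ => ?_
              rw [← Finset.mul_sum, (hP2 n s a).2, mul_one]
          _ = ∑ s, st2 n s := by
              refine Finset.sum_congr rfl fun s _ => ?_
              simp only [hp2]
              rw [← Finset.mul_sum, (hπ2 n s).2, mul_one]
          _ = 1 := ih.2
  have hp1nn : ∀ n s a, 0 ≤ p1 n s a := fun n s a => by
    rw [hp1]; exact mul_nonneg ((hst1p n).1 s) ((hπ1 n s).1 a)
  -- key one-step recursion
  have key : ∀ (n : ℕ) (em ep : ℝ),
      (∑ s, ∑ a, p1 n s a * ((1/2) * ∑ s', |P1 n s a s' - P2 n s a s'|) ≤ em) →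
      (∀ s, (1/2) * ∑ a, |π1 (n+1) s a - π2 (n+1) s a| ≤ ep) →
      (∑ s, ∑ a, |p1 (n+1) s a - p2 (n+1) s a|) ≤
        (∑ s, ∑ a, |p1 n s a - p2 n s a|) + 2*em + 2*ep := by
    intro n em ep hm hp
    -- Step 2 first: state L1 recursion
    have step2 : (∑ s', |st1 (n+1) s' - st2 (n+1) s'|) ≤
        (∑ s, ∑ a, |p1 n s a - p2 n s a|) + 2*em := by
      have h1 : ∀ s', |st1 (n+1) s' - st2 (n+1) s'| ≤
          ∑ s, ∑ a, (p1 n s a * |P1 n s a s' - P2 n s a s'| + |p1 n s a - p2 n s a| * P2 n s a s') := by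
        intro s'
        rw [hst1, hst2, ← Finset.sum_sub_distrib]
        refine (Finset.abs_sum_le_sum_abs _ _).trans ?_
        refine Finset.sum_le_sum fun s _ => ?_
        rw [← Finset.sum_sub_distrib]
        refine (Finset.abs_sum_le_sum_abs _ _).trans ?_
        refine Finset.sum_le_sum fun a _ => ?_
        have : p1 n s a * P1 n s a s' - p2 n s a * P2 n s a s' =
            p1 n s a * (P1 n s a s' - P2 n s a s') + (p1 n s a - p2 n s a) * P2 n s a s' := by ring
        rw [this]
        refine (abs_add_le _ _).trans ?_
        rw [abs_mul, abs_mul, abs_of_nonneg (hp1nn n s a), abs_of_nonneg ((hP2 n s a).1 s')]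
      calc (∑ s', |st1 (n+1) s' - st2 (n+1) s'|)
          ≤ ∑ s', ∑ s, ∑ a, (p1 n s a * |P1 n s a s' - P2 n s a s'| + |p1 n s a - p2 n s a| * P2 n s a s') :=
            Finset.sum_le_sum fun s' _ => h1 s'
        _ = ∑ s, ∑ a, ∑ s', (p1 n s a * |P1 n s a s' - P2 n s a s'| + |p1 n s a - p2 n s a| * P2 n s a s') := by
            rw [Finset.sum_comm]
            exact Finset.sum_congr rfl fun s _ => Finset.sum_comm
        _ = ∑ s, ∑ a, (p1 n s a * (∑ s', |P1 n s a s' - P2 n s a s'|) + |p1 n s a - p2 n s a|) := by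
            refine Finset.sum_congr rfl fun s _ => Finset.sum_congr rfl fun a _ => ?_
            rw [Finset.sum_add_distrib, ← Finset.mul_sum, ← Finset.mul_sum, (hP2 n s a).2, mul_one]
        _ = 2 * (∑ s, ∑ a, p1 n s a * ((1/2) * ∑ s', |P1 n s a s' - P2 n s a s'|)) +
              (∑ s, ∑ a, |p1 n s a - p2 n s a|) := by
            rw [Finset.mul_sum, ← Finset.sum_add_distrib]
            refine Finset.sum_congr rfl fun s _ => ?_
            rw [Finset.mul_sum, ← Finset.sum_add_distrib]
            refine Finset.sum_congr rfl fun a _ => ?_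
            ring
        _ ≤ (∑ s, ∑ a, |p1 n s a - p2 n s a|) + 2*em := by linarith
    -- Step 1: joint from state + policy
    have step1 : (∑ s, ∑ a, |p1 (n+1) s a - p2 (n+1) s a|) ≤
        (∑ s', |st1 (n+1) s' - st2 (n+1) s'|) + 2*ep := by
      have h2 : ∀ s, (∑ a, |p1 (n+1) s a - p2 (n+1) s a|) ≤
          |st1 (n+1) s - st2 (n+1) s| + st2 (n+1) s * (2*ep) := by
        intro s
        have hb : (∑ a, |p1 (n+1) s a - p2 (n+1) s a|) ≤
            |st1 (n+1) s - st2 (n+1) s| * (∑ a, π1 (n+1) s a) +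
              st2 (n+1) s * (∑ a, |π1 (n+1) s a - π2 (n+1) s a|) := by
          rw [Finset.mul_sum, Finset.mul_sum, ← Finset.sum_add_distrib]
          refine Finset.sum_le_sum fun a _ => ?_
          rw [hp1, hp2]
          have : st1 (n+1) s * π1 (n+1) s a - st2 (n+1) s * π2 (n+1) s a =
              (st1 (n+1) s - st2 (n+1) s) * π1 (n+1) s a +
                st2 (n+1) s * (π1 (n+1) s a - π2 (n+1) s a) := by ring
          rw [this]
          refine (abs_add_le _ _).trans ?_
          rw [abs_mul, abs_mul]
          gcongr
          · rw [abs_of_nonneg ((hπ1 (n+1) s).1 a)]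
          · rw [abs_of_nonneg ((hst2p (n+1)).1 s)]
        refine hb.trans ?_
        rw [(hπ1 (n+1) s).2, mul_one]
        gcongr
        · exact (hst2p (n+1)).1 s
        · have := hp s; linarith
      calc (∑ s, ∑ a, |p1 (n+1) s a - p2 (n+1) s a|)
          ≤ ∑ s, (|st1 (n+1) s - st2 (n+1) s| + st2 (n+1) s * (2*ep)) :=
            Finset.sum_le_sum fun s _ => h2 s
        _ = (∑ s', |st1 (n+1) s' - st2 (n+1) s'|) + (∑ s, st2 (n+1) s) * (2*ep) := by
            rw [Finset.sum_add_distrib, Finset.sum_mul]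
        _ = (∑ s', |st1 (n+1) s' - st2 (n+1) s'|) + 2*ep := by
            rw [(hst2p (n+1)).2, one_mul]
    linarith
  -- pre-switch induction
  have pre : ∀ n, n ≤ tsw → (∑ s, ∑ a, |p1 n s a - p2 n s a|) ≤ 2 * (n:ℝ) * (εmpre + εppre) := by
    intro n
    induction n with
    | zero =>
      intro _
      have h0 : ∀ s a, p1 0 s a = p2 0 s a := by
        intro s a; rw [hp1, hp2, hst1_0, hst2_0, hπ0]
      simp [h0]
    | succ n ih =>
      intro hle
      have hm := hmpre (n+1) (by omega) hle
      have hp := hppre (n+1) (by omega) hle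
      simp only [Nat.add_sub_cancel] at hm
      have := key n εmpre εppre hm hp
      have hIH := ih (by omega)
      push_cast
      push_cast at hIH
      linarith
  -- post-switch induction
  have post : ∀ k, tsw + k ≤ t → (∑ s, ∑ a, |p1 (tsw + k) s a - p2 (tsw + k) s a|) ≤
      2 * (k:ℝ) * (εmpost + εppost) + 2 * (tsw:ℝ) * (εmpre + εppre) := by
    intro k
    induction k with
    | zero =>
      intro _
      have := pre tsw le_rfl
      simpa using this
    | succ k ih =>
      intro hle
      have hm := hmpost (tsw + k + 1) (by omega) (by omega)
      have hp := hppost (tsw + k + 1) (by omega) (by omega)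
      simp only [Nat.add_sub_cancel] at hm
      have hkey := key (tsw + k) εmpost εppost hm (by
        intro s
        have := hp s
        convert this using 3)
      have hIH := ih (by omega)
      have heq : tsw + (k + 1) = tsw + k + 1 := by omega
      rw [heq]
      push_cast
      push_cast at hIH
      linarith
  obtain ⟨k, hk⟩ : ∃ k, t = tsw + k := ⟨t - tsw, by omega⟩
  subst hk
  have := post k le_rfl
  push_cast
  push_cast at this
  linarith
end

section
/- Let γ ∈ [0,1), k ≥ 1 an integer, and ε_π, ε_m ≥ 0. Suppose real sequences satisfy: d_0 ≤ 2ε_π; d_t ≤ 2tε_π + t(ε_π + ε_m) + (ε_π + ε_m) for 1 ≤ t ≤ k−1; and d_t ≤ 2tε_π + k(ε_π + ε_m) + (ε_π + ε_m) for t ≥ k. Then Σ_{t=0}^∞ γ^t d_t ≤ (1+γ²)/(1−γ)² · 2ε_π + (γ − kγ^k + (k−1)γ^{k+1})/(1−γ)² · (ε_π + ε_m) + (γ^k − γ)/(γ−1) · (ε_π + ε_m) + γ^k/(1−γ) · (k+1)(ε_π + ε_m). -/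
open Finset

lemma aux_sum_range_mul_geom (γ : ℝ) (hγ : γ ≠ 1) (k : ℕ) :
    ∑ t ∈ Finset.range k, (t : ℝ) * γ ^ t
      = (γ - k * γ ^ k + ((k : ℝ) - 1) * γ ^ (k + 1)) / (1 - γ) ^ 2 := by
  have h1 : (1 - γ) ≠ 0 := by intro h; apply hγ; linarith
  induction k with
  | zero => simp
  | succ n ih =>
    rw [Finset.sum_range_succ, ih]
    push_cast
    field_simp
    ring

/-- discounted-sum evaluation of the per-step discrepancy bounds (C_Th2). -/
theorem stmt_5 (γ επ εm : ℝ) (k : ℕ) (d : ℕ → ℝ)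
    (hγ0 : 0 ≤ γ) (hγ1 : γ < 1) (hk : 1 ≤ k)
    (hεπ : 0 ≤ επ) (hεm : 0 ≤ εm)
    (hd : ∀ t, 0 ≤ d t)
    (hd0 : d 0 ≤ 2 * επ)
    (hdlt : ∀ t, 1 ≤ t → t < k →
      d t ≤ 2 * t * επ + t * (επ + εm) + (επ + εm))
    (hdge : ∀ t, k ≤ t →
      d t ≤ 2 * t * επ + k * (επ + εm) + (επ + εm)) :
    ∑' t : ℕ, γ ^ t * d t ≤
      (1 + γ ^ 2) / (1 - γ) ^ 2 * (2 * επ)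
      + (γ - k * γ ^ k + ((k : ℝ) - 1) * γ ^ (k + 1)) / (1 - γ) ^ 2 * (επ + εm)
      + (γ ^ k - γ) / (γ - 1) * (επ + εm)
      + γ ^ k / (1 - γ) * (((k : ℝ) + 1) * (επ + εm)) := by
  set B : ℝ := επ + εm with hB
  have hBpos : 0 ≤ B := by positivity
  have h1γ : (0:ℝ) < 1 - γ := by linarith
  have hnorm : ‖γ‖ < 1 := by rw [Real.norm_eq_abs, abs_of_nonneg hγ0]; exact hγ1
  -- the dominating series, split into pieces
  set G1 : ℕ → ℝ := fun t => 2 * επ * ((t : ℝ) * γ ^ t) with hG1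
  set G2 : ℕ → ℝ := fun t => B * (((min t k : ℕ) : ℝ) * γ ^ t) with hG2
  set G3 : ℕ → ℝ := fun t => B * γ ^ t with hG3
  set G4 : ℕ → ℝ := fun t => if t = 0 then 2 * επ - B else 0 with hG4
  have hmulgeom : Summable (fun t : ℕ => (t : ℝ) * γ ^ t) := by
    simpa using summable_pow_mul_geometric_of_norm_lt_one 1 hnorm
  have hS1 : Summable G1 := hmulgeom.mul_left _
  have hmin : Summable (fun t : ℕ => ((min t k : ℕ) : ℝ) * γ ^ t) := by
    refine Summable.of_nonneg_of_le (f := fun t : ℕ => (k : ℝ) * γ ^ t)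
      (fun t => by positivity) ?_ ?_
    · intro t
      apply mul_le_mul_of_nonneg_right _ (by positivity)
      exact_mod_cast Nat.cast_le.mpr (min_le_right t k)
    · exact (summable_geometric_of_lt_one hγ0 hγ1).mul_left _
  have hS2 : Summable G2 := hmin.mul_left _
  have hS3 : Summable G3 := (summable_geometric_of_lt_one hγ0 hγ1).mul_left _
  have hS4 : Summable G4 := by
    apply summable_of_ne_finset_zero (s := {0})
    intro t ht
    simp only [Finset.mem_singleton] at ht
    simp [hG4, ht]
  set G : ℕ → ℝ := fun t => G1 t + G2 t + G3 t + G4 t with hG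
  have hSG : Summable G := ((hS1.add hS2).add hS3).add hS4
  -- pointwise bound γ^t * d t ≤ G t
  have hle : ∀ t, γ ^ t * d t ≤ G t := by
    intro t
    have hγt : 0 ≤ γ ^ t := by positivity
    rcases Nat.eq_zero_or_pos t with h0 | hpos
    · subst h0
      simp only [hG, hG1, hG2, hG3, hG4, if_pos rfl]
      simp only [pow_zero, one_mul, Nat.cast_zero, Nat.zero_min, Nat.cast_zero, mul_one]
      push_cast
      nlinarith [hd0]
    · have hut : d t ≤ 2 * t * επ + ((min t k : ℕ) : ℝ) * B + B := by
        rcases lt_or_ge t k with hlt | hge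
        · have := hdlt t hpos hlt
          rw [min_eq_left (le_of_lt hlt)]
          linarith [this]
        · have := hdge t hge
          rw [min_eq_right hge]
          linarith [this]
      have ht0 : t ≠ 0 := Nat.pos_iff_ne_zero.mp hpos
      simp only [hG, hG1, hG2, hG3, hG4, if_neg ht0, add_zero]
      calc γ ^ t * d t ≤ γ ^ t * (2 * t * επ + ((min t k : ℕ) : ℝ) * B + B) :=
            mul_le_mul_of_nonneg_left hut hγt
        _ = 2 * επ * ((t : ℝ) * γ ^ t) + B * (((min t k : ℕ) : ℝ) * γ ^ t) + B * γ ^ t := by ring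
  have hSd : Summable (fun t : ℕ => γ ^ t * d t) :=
    Summable.of_nonneg_of_le (fun t => mul_nonneg (by positivity) (hd t)) hle hSG
  have hmain : ∑' t : ℕ, γ ^ t * d t ≤ ∑' t, G t := Summable.tsum_le_tsum hle hSd hSG
  -- compute the tsum of G
  have hT1 : ∑' t, G1 t = 2 * επ * (γ / (1 - γ) ^ 2) := by
    rw [hG1, tsum_mul_left, tsum_coe_mul_geometric_of_norm_lt_one hnorm]
  have htshift : ∑' t : ℕ, ((min (t + k) k : ℕ) : ℝ) * γ ^ (t + k)
      = (k : ℝ) * γ ^ k * (1 - γ)⁻¹ := by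
    have : ∀ t : ℕ, ((min (t + k) k : ℕ) : ℝ) * γ ^ (t + k) = (k : ℝ) * γ ^ k * γ ^ t := by
      intro t
      rw [min_eq_right (Nat.le_add_left k t), pow_add]
      ring
    rw [tsum_congr this, tsum_mul_left, tsum_geometric_of_lt_one hγ0 hγ1]
  have hTmin : ∑' t : ℕ, ((min t k : ℕ) : ℝ) * γ ^ t
      = (γ - k * γ ^ k + ((k : ℝ) - 1) * γ ^ (k + 1)) / (1 - γ) ^ 2
        + (k : ℝ) * γ ^ k * (1 - γ)⁻¹ := by
    rw [← hmin.sum_add_tsum_nat_add k, htshift]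
    congr 1
    rw [← aux_sum_range_mul_geom γ (by linarith) k]
    apply Finset.sum_congr rfl
    intro t ht
    rw [min_eq_left (le_of_lt (Finset.mem_range.mp ht))]
  have hT2 : ∑' t, G2 t
      = B * ((γ - k * γ ^ k + ((k : ℝ) - 1) * γ ^ (k + 1)) / (1 - γ) ^ 2
        + (k : ℝ) * γ ^ k * (1 - γ)⁻¹) := by
    rw [hG2, tsum_mul_left, hTmin]
  have hT3 : ∑' t, G3 t = B * (1 - γ)⁻¹ := by
    rw [hG3, tsum_mul_left, tsum_geometric_of_lt_one hγ0 hγ1]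
  have hT4 : ∑' t, G4 t = 2 * επ - B := by
    rw [hG4]
    exact tsum_ite_eq 0 (fun _ => 2 * επ - B)
  have hTG : ∑' t, G t
      = 2 * επ * (γ / (1 - γ) ^ 2)
        + B * ((γ - k * γ ^ k + ((k : ℝ) - 1) * γ ^ (k + 1)) / (1 - γ) ^ 2
          + (k : ℝ) * γ ^ k * (1 - γ)⁻¹)
        + B * (1 - γ)⁻¹ + (2 * επ - B) := by
    rw [hG]
    rw [Summable.tsum_add ((hS1.add hS2).add hS3) hS4, Summable.tsum_add (hS1.add hS2) hS3,
      Summable.tsum_add hS1 hS2, hT1, hT2, hT3, hT4]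
  -- final algebraic comparison
  rw [hTG] at hmain
  refine hmain.trans ?_
  rw [← sub_nonneg]
  have hkey : (1 + γ ^ 2) / (1 - γ) ^ 2 * (2 * επ)
      + (γ - k * γ ^ k + ((k : ℝ) - 1) * γ ^ (k + 1)) / (1 - γ) ^ 2 * B
      + (γ ^ k - γ) / (γ - 1) * B
      + γ ^ k / (1 - γ) * (((k : ℝ) + 1) * B)
      - (2 * επ * (γ / (1 - γ) ^ 2)
        + B * ((γ - k * γ ^ k + ((k : ℝ) - 1) * γ ^ (k + 1)) / (1 - γ) ^ 2
          + (k : ℝ) * γ ^ k * (1 - γ)⁻¹)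
        + B * (1 - γ)⁻¹ + (2 * επ - B))
      = 2 * επ * γ / (1 - γ) ^ 2 := by
    have h1 : (1 - γ) ≠ 0 := ne_of_gt h1γ
    have h2 : (γ - 1) ≠ 0 := by intro h; apply h1; linarith
    field_simp
    ring
  rw [hkey]
  positivity
end

section
/- Let γ ∈ (0,1), r_max > 0, ε_m ∈ [0,1], and ε_π = 1 − ε_m. Define C_Th1 = r_max(2γ(ε_m + 2ε_π)/(1−γ)² + 4ε_π/(1−γ)) and C_Th2(k) = r_max((1+γ²)/(1−γ)²·2ε_π + (γ − kγ^k + (k−1)γ^{k+1})/(1−γ)²·(ε_π+ε_m) + (γ^k − γ)/(γ−1)·(ε_π+ε_m) + γ^k/(1−γ)·(k+1)(ε_π+ε_m)). Then C_Th2(1) < C_Th1 whenever γ ≥ 1/2. -/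
/-- C_Th2(1) < C_Th1 for γ ≥ 1/2, with ε_π = 1 - ε_m. -/
theorem stmt_10 (γ rmax εm επ : ℝ)
    (hγ0 : 0 < γ) (hγ1 : γ < 1) (hγhalf : 1 / 2 ≤ γ)
    (hrmax : 0 < rmax) (hεm0 : 0 ≤ εm) (hεm1 : εm ≤ 1) (hεπ : επ = 1 - εm) :
    rmax * ((1 + γ ^ 2) / (1 - γ) ^ 2 * (2 * επ)
        + (γ - (1 : ℝ) * γ ^ (1 : ℕ) + ((1 : ℝ) - 1) * γ ^ (1 + 1)) / (1 - γ) ^ 2 * (επ + εm)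
        + (γ ^ (1 : ℕ) - γ) / (γ - 1) * (επ + εm)
        + γ ^ (1 : ℕ) / (1 - γ) * (((1 : ℝ) + 1) * (επ + εm))) <
      rmax * (2 * γ * (εm + 2 * επ) / (1 - γ) ^ 2 + 4 * επ / (1 - γ)) := by
  subst hεπ
  have h1 : (0:ℝ) < 1 - γ := by linarith
  rw [mul_lt_mul_iff_right₀ hrmax]
  have hne : (1 - γ) ≠ 0 := ne_of_gt h1
  have hne2 : (γ - 1) ≠ 0 := by intro h; apply hne; linarith
  rw [div_add_div _ _ (by positivity : ((1-γ)^2:ℝ) ≠ 0) (by positivity)]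
  field_simp
  rw [div_lt_iff_of_neg (by linarith)]
  have key : (1 - εm) * (γ ^ 2 + γ - 1) < γ ^ 2 := by
    rcases le_or_gt (γ ^ 2 + γ - 1) 0 with h | h
    · nlinarith
    · nlinarith
  nlinarith [mul_lt_mul_of_pos_right key (by positivity : (0:ℝ) < (1 - γ) ^ 4)]
end

section
/- Let γ ∈ [0,1), r_max > 0, ε_m, ε_π ≥ 0, and let C_Th2(k) = r_max((1+γ²)/(1−γ)²·2ε_π + (γ − kγ^k + (k−1)γ^{k+1})/(1−γ)²·(ε_π+ε_m) + (γ^k − γ)/(γ−1)·(ε_π+ε_m) + γ^k/(1−γ)·(k+1)(ε_π+ε_m)) for integer k ≥ 1. If ε_π + ε_m > 0 and γ > 0, then C_Th2(k+1) ≥ C_Th2(k) for all k ≥ 1; in particular C_Th2 is minimized at k = 1. -/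
/-- monotonicity of the branched-rollout discrepancy C_Th2 in k. -/
theorem stmt_17 (γ rmax επ εm : ℝ)
    (hγ0 : 0 < γ) (hγ1 : γ < 1) (hrmax : 0 < rmax)
    (hεπ : 0 ≤ επ) (hεm : 0 ≤ εm) (hpos : 0 < επ + εm)
    (C2 : ℕ → ℝ)
    (hC2 : ∀ k : ℕ, C2 k =
      rmax * ((1 + γ ^ 2) / (1 - γ) ^ 2 * (2 * επ)
        + (γ - (k : ℝ) * γ ^ k + ((k : ℝ) - 1) * γ ^ (k + 1)) / (1 - γ) ^ 2 * (επ + εm)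
        + (γ ^ k - γ) / (γ - 1) * (επ + εm)
        + γ ^ k / (1 - γ) * (((k : ℝ) + 1) * (επ + εm)))) :
    (∀ k : ℕ, 1 ≤ k → C2 k ≤ C2 (k + 1)) ∧ (∀ k : ℕ, 1 ≤ k → C2 1 ≤ C2 k) := by
  have h1 : (1:ℝ) - γ ≠ 0 := by linarith
  have h2 : γ - 1 ≠ 0 := by linarith
  have key : ∀ k : ℕ, C2 (k + 1) - C2 k = rmax * ((επ + εm) * (γ ^ (k + 1) / (1 - γ))) := by
    intro k
    rw [hC2, hC2]
    push_cast
    field_simp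
    ring
  have step : ∀ k : ℕ, C2 k ≤ C2 (k + 1) := by
    intro k
    have hnn : 0 ≤ rmax * ((επ + εm) * (γ ^ (k + 1) / (1 - γ))) := by
      have : (0:ℝ) < 1 - γ := by linarith
      positivity
    nlinarith [key k]
  refine ⟨fun k _ => step k, fun k hk => ?_⟩
  induction k with
  | zero => omega
  | succ n ih =>
    rcases Nat.eq_or_lt_of_le hk with h | h
    · rw [← h]
    · exact le_trans (ih (by omega)) (step n)
end

section
/- Suppose the true return and branched-rollout model return over a finite state-action space satisfy |E_true[R] − E_model[R]| ≤ r_max(d_0 + Σ_{t=1}^{k−1} γ^t d_t + Σ_{t=k}^∞ γ^t e_t) where d_0 ≤ 2ε_π, d_t ≤ 2tε_π + (t+1)(ε_π+ε_m) for 1 ≤ t ≤ k−1, and e_t ≤ 2tε_π + (k+1)(ε_π+ε_m) for t ≥ k. Then E_true[R] ≥ E_model[R] − r_max((1+γ²)/(1−γ)²·2ε_π + (γ−kγ^k+(k−1)γ^{k+1})/(1−γ)²·(ε_π+ε_m) + (γ^k−γ)/(γ−1)·(ε_π+ε_m) + γ^k/(1−γ)·(k+1)(ε_π+ε_m)). 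-/
lemma aux_sumP (γ : ℝ) : ∀ k : ℕ,
    (∑ t ∈ Finset.range k, (t : ℝ) * γ ^ t) * (1 - γ) ^ 2
      = γ - (k : ℝ) * γ ^ k + ((k : ℝ) - 1) * γ ^ (k + 1)
  | 0 => by simp
  | (n + 1) => by
    rw [Finset.sum_range_succ, add_mul, aux_sumP γ n]
    push_cast
    ring

/-- combining the per-step L1 bounds with the geometric series to get
Theorem A.3 (branched rollout performance guarantee). -/
theorem stmt_18 (Etrue Emodel rmax γ επ εm : ℝ) (k : ℕ) (d e : ℕ → ℝ)
    (hγ0 : 0 ≤ γ) (hγ1 : γ < 1) (hk : 1 ≤ k) (hrmax : 0 < rmax)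
    (hεπ : 0 ≤ επ) (hεm : 0 ≤ εm)
    (hd : ∀ t, 0 ≤ d t) (he : ∀ t, 0 ≤ e t)
    (hd0 : d 0 ≤ 2 * επ)
    (hdt : ∀ t, 1 ≤ t → t < k → d t ≤ 2 * t * επ + ((t : ℝ) + 1) * (επ + εm))
    (het : ∀ t, k ≤ t → e t ≤ 2 * t * επ + ((k : ℝ) + 1) * (επ + εm))
    (hmain : |Etrue - Emodel| ≤
      rmax * (d 0 + (∑ t ∈ Finset.Ico 1 k, γ ^ t * d t)
        + ∑' t : ℕ, γ ^ (k + t) * e (k + t))) :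
    Etrue ≥ Emodel -
      rmax * ((1 + γ ^ 2) / (1 - γ) ^ 2 * (2 * επ)
        + (γ - (k : ℝ) * γ ^ k + ((k : ℝ) - 1) * γ ^ (k + 1)) / (1 - γ) ^ 2 * (επ + εm)
        + (γ ^ k - γ) / (γ - 1) * (επ + εm)
        + γ ^ k / (1 - γ) * (((k : ℝ) + 1) * (επ + εm))) := by
  have h1γ : 0 < 1 - γ := by linarith
  have hγne : γ ≠ 1 := by linarith
  have hnorm : ‖γ‖ < 1 := by rw [Real.norm_eq_abs, abs_of_nonneg hγ0]; exact hγ1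
  set c : ℝ := ((k : ℝ) + 1) * (επ + εm) with hc
  have hc0 : 0 ≤ c := by positivity
  -- summability facts
  have hsum_t : Summable (fun n : ℕ => (n : ℝ) * γ ^ n) :=
    (hasSum_coe_mul_geometric_of_norm_lt_one hnorm).summable
  have hsum_geo : Summable (fun n : ℕ => γ ^ n) := summable_geometric_of_lt_one hγ0 hγ1
  have hinj : Function.Injective (fun t : ℕ => k + t) := add_right_injective k
  have hsum_ts : Summable (fun t : ℕ => ((k + t : ℕ) : ℝ) * γ ^ (k + t)) :=
    hsum_t.comp_injective hinj
  have hsum_gs : Summable (fun t : ℕ => γ ^ (k + t)) := hsum_geo.comp_injective hinj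
  have hg_eq : (fun t : ℕ => γ ^ (k + t) * (2 * ((k + t : ℕ) : ℝ) * επ + c))
      = fun t : ℕ => 2 * επ * (((k + t : ℕ) : ℝ) * γ ^ (k + t)) + c * γ ^ (k + t) := by
    funext t; ring
  have hsumg' : Summable (fun t : ℕ => γ ^ (k + t) * (2 * ((k + t : ℕ) : ℝ) * επ + c)) := by
    rw [hg_eq]; exact (hsum_ts.mul_left _).add (hsum_gs.mul_left _)
  have hfle : ∀ t : ℕ, γ ^ (k + t) * e (k + t)
      ≤ γ ^ (k + t) * (2 * ((k + t : ℕ) : ℝ) * επ + c) := fun t =>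
    mul_le_mul_of_nonneg_left (het (k + t) (Nat.le_add_right k t)) (pow_nonneg hγ0 _)
  have hsumf : Summable (fun t : ℕ => γ ^ (k + t) * e (k + t)) :=
    Summable.of_nonneg_of_le (fun t => mul_nonneg (pow_nonneg hγ0 _) (he _)) hfle hsumg'
  have htail1 : (∑' t : ℕ, γ ^ (k + t) * e (k + t))
      ≤ ∑' t : ℕ, γ ^ (k + t) * (2 * ((k + t : ℕ) : ℝ) * επ + c) :=
    Summable.tsum_le_tsum hfle hsumf hsumg'
  -- evaluate the bounding tsum
  have hshift : (∑ i ∈ Finset.range k, (i : ℝ) * γ ^ i)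
      + ∑' t : ℕ, ((t + k : ℕ) : ℝ) * γ ^ (t + k) = γ / (1 - γ) ^ 2 := by
    rw [Summable.sum_add_tsum_nat_add k hsum_t]
    exact tsum_coe_mul_geometric_of_norm_lt_one hnorm
  have hts_val : (∑' t : ℕ, ((k + t : ℕ) : ℝ) * γ ^ (k + t))
      = γ / (1 - γ) ^ 2 - ∑ i ∈ Finset.range k, (i : ℝ) * γ ^ i := by
    have : (fun t : ℕ => ((k + t : ℕ) : ℝ) * γ ^ (k + t))
        = fun t : ℕ => ((t + k : ℕ) : ℝ) * γ ^ (t + k) := by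
      funext t; rw [Nat.add_comm k t]
    rw [this]; linarith [hshift]
  have hgs_val : (∑' t : ℕ, γ ^ (k + t)) = γ ^ k * (1 - γ)⁻¹ := by
    have : (fun t : ℕ => γ ^ (k + t)) = fun t : ℕ => γ ^ k * γ ^ t := by
      funext t; rw [pow_add]
    rw [this, tsum_mul_left, tsum_geometric_of_lt_one hγ0 hγ1]
  have htail2 : (∑' t : ℕ, γ ^ (k + t) * (2 * ((k + t : ℕ) : ℝ) * επ + c))
      = 2 * επ * (γ / (1 - γ) ^ 2 - ∑ i ∈ Finset.range k, (i : ℝ) * γ ^ i)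
        + c * (γ ^ k * (1 - γ)⁻¹) := by
    rw [hg_eq, Summable.tsum_add ((hsum_ts.mul_left _)) ((hsum_gs.mul_left _)),
      tsum_mul_left, tsum_mul_left, hts_val, hgs_val]
  -- finite sums
  set P : ℝ := ∑ t ∈ Finset.Ico 1 k, (t : ℝ) * γ ^ t with hP
  set Q : ℝ := ∑ t ∈ Finset.Ico 1 k, γ ^ t with hQ
  have hrangeP : (∑ i ∈ Finset.range k, (i : ℝ) * γ ^ i) = P := by
    rw [hP, Finset.range_eq_Ico, Finset.sum_eq_sum_Ico_succ_bot hk]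
    simp
  have hPval : P * (1 - γ) ^ 2 = γ - (k : ℝ) * γ ^ k + ((k : ℝ) - 1) * γ ^ (k + 1) := by
    rw [← hrangeP]; exact aux_sumP γ k
  have hQval : Q = (γ ^ k - γ) / (γ - 1) := by
    have h1 : (∑ i ∈ Finset.range k, γ ^ i) = (γ ^ k - 1) / (γ - 1) := geom_sum_eq hγne k
    have h2 : (∑ i ∈ Finset.range k, γ ^ i) = 1 + Q := by
      rw [hQ, Finset.range_eq_Ico, Finset.sum_eq_sum_Ico_succ_bot hk]; simp
    have hγm1 : γ - 1 ≠ 0 := by intro h; apply hγne; linarith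
    field_simp at h1 ⊢
    nlinarith [h1, h2]
  -- bound the d-sum
  have hdsum : (∑ t ∈ Finset.Ico 1 k, γ ^ t * d t)
      ≤ 2 * επ * P + (επ + εm) * (P + Q) := by
    have : (∑ t ∈ Finset.Ico 1 k, γ ^ t * d t)
        ≤ ∑ t ∈ Finset.Ico 1 k, γ ^ t * (2 * t * επ + ((t : ℝ) + 1) * (επ + εm)) := by
      apply Finset.sum_le_sum
      intro t ht
      rw [Finset.mem_Ico] at ht
      exact mul_le_mul_of_nonneg_left (hdt t ht.1 ht.2) (pow_nonneg hγ0 _)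
    calc (∑ t ∈ Finset.Ico 1 k, γ ^ t * d t)
        ≤ ∑ t ∈ Finset.Ico 1 k, γ ^ t * (2 * t * επ + ((t : ℝ) + 1) * (επ + εm)) := this
      _ = 2 * επ * P + (επ + εm) * (P + Q) := by
          rw [hP, hQ, ← Finset.sum_add_distrib, Finset.mul_sum, Finset.mul_sum,
            ← Finset.sum_add_distrib]
          apply Finset.sum_congr rfl
          intro t _
          ring
  -- combine: total sum S ≤ closed-form bound
  have hQnn : 0 ≤ Q := Finset.sum_nonneg fun t _ => pow_nonneg hγ0 _
  have hS : d 0 + (∑ t ∈ Finset.Ico 1 k, γ ^ t * d t)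
      + (∑' t : ℕ, γ ^ (k + t) * e (k + t))
      ≤ (1 + γ ^ 2) / (1 - γ) ^ 2 * (2 * επ)
        + (γ - (k : ℝ) * γ ^ k + ((k : ℝ) - 1) * γ ^ (k + 1)) / (1 - γ) ^ 2 * (επ + εm)
        + (γ ^ k - γ) / (γ - 1) * (επ + εm)
        + γ ^ k / (1 - γ) * c := by
    have htail : (∑' t : ℕ, γ ^ (k + t) * e (k + t))
        ≤ 2 * επ * (γ / (1 - γ) ^ 2 - P) + c * (γ ^ k * (1 - γ)⁻¹) := by
      have h := htail1.trans htail2.le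
      rwa [hrangeP] at h
    have key1 : (γ - (k : ℝ) * γ ^ k + ((k : ℝ) - 1) * γ ^ (k + 1)) / (1 - γ) ^ 2 = P := by
      rw [← hPval]; field_simp
    have key2 : γ ^ k / (1 - γ) = γ ^ k * (1 - γ)⁻¹ := div_eq_mul_inv _ _
    have key3 : 2 * επ + 2 * επ * (γ / (1 - γ) ^ 2)
        ≤ (1 + γ ^ 2) / (1 - γ) ^ 2 * (2 * επ) := by
      rw [div_mul_eq_mul_div, ← sub_nonneg]
      have : (1 + γ ^ 2) * (2 * επ) / (1 - γ) ^ 2 - (2 * επ + 2 * επ * (γ / (1 - γ) ^ 2))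
          = 2 * επ * γ / (1 - γ) ^ 2 := by field_simp; ring
      rw [this]
      positivity
    rw [key1, key2, ← hQval]
    linarith [hdsum, htail, key3, hd0]
  -- conclude
  have hSm : rmax * (d 0 + (∑ t ∈ Finset.Ico 1 k, γ ^ t * d t)
      + ∑' t : ℕ, γ ^ (k + t) * e (k + t))
      ≤ rmax * ((1 + γ ^ 2) / (1 - γ) ^ 2 * (2 * επ)
        + (γ - (k : ℝ) * γ ^ k + ((k : ℝ) - 1) * γ ^ (k + 1)) / (1 - γ) ^ 2 * (επ + εm)
        + (γ ^ k - γ) / (γ - 1) * (επ + εm)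
        + γ ^ k / (1 - γ) * (((k : ℝ) + 1) * (επ + εm))) :=
    mul_le_mul_of_nonneg_left (by rw [← hc]; exact hS) hrmax.le
  have habs := abs_le.mp (hmain.trans hSm)
  rw [hc]
  linarith [habs.1]
end
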